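/- Let Ω̂ = (Ω̂^(1), …, Ω̂^(K)) be a local minimizer of Q₃(2(λ₁λ₂)^{1/2}, ·). Then there exists a local minimizer (Θ̂, Γ̂) of Q₁(λ₁, λ₂, ·, ·) such that θ̂_jl Γ̂_jl^(k) = Ω̂_jl^(k) for all 1 ≤ j, l ≤ p and 1 ≤ k ≤ K. -/
import Mathlib


open scoped BigOperators
open Matrix

noncomputable section

namespace JF

/-- Frobenius norm of a real matrix. -/
def frobG {α β : Type*} [Fintype α] [Fintype β] (B : Matrix α β ℝ) : ℝ :=
  Real.sqrt (∑ a, ∑ b, B a b ^ 2)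

/-- The `(j,l)` block (an `M × M` matrix) of a `pM × pM` matrix. -/
def blk {p M : ℕ} (A : Matrix (Fin p × Fin M) (Fin p × Fin M) ℝ) (j l : Fin p) :
    Matrix (Fin M) (Fin M) ℝ := fun a b => A (j, a) (l, b)

/-- `M`-block version of the ℓ∞ matrix norm: `max_j Σ_l ‖A_{jl}‖_F`. -/
def blockInfty {p M : ℕ} (A : Matrix (Fin p × Fin M) (Fin p × Fin M) ℝ) : ℝ :=
  ⨆ j, ∑ l, frobG (blk A j l)

/-- `M`-block version of the max (elementwise ℓ∞) norm: `max_{j,l} ‖A_{jl}‖_F`. -/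
def blockMax {p M : ℕ} (A : Matrix (Fin p × Fin M) (Fin p × Fin M) ℝ) : ℝ :=
  ⨆ j, ⨆ l, frobG (blk A j l)

/-- `M`-block version of the ℓ₁ matrix norm: `max_l Σ_j ‖A_{jl}‖_F`. -/
def blockOne {p M : ℕ} (A : Matrix (Fin p × Fin M) (Fin p × Fin M) ℝ) : ℝ :=
  ⨆ l, ∑ j, frobG (blk A j l)

/-- Generalized block ℓ∞ norm, with block-rows/columns indexed by an arbitrary
finite type `ι` and blocks of shape `α × α`. -/
def bInftyG {ι α : Type*} [Fintype ι] [Fintype α] (A : Matrix (ι × α) (ι × α) ℝ) : ℝ :=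
  ⨆ j, ∑ l, frobG (fun a b => A (j, a) (l, b))

/-- Entrywise ℓ₁ norm of a matrix. -/
def ell1 {α β : Type*} [Fintype α] [Fintype β] (A : Matrix α β ℝ) : ℝ :=
  ∑ i, ∑ j, |A i j|

/-- `j`-th block of a vector in `ℝ^{pM}`. -/
def vblk {p M : ℕ} (u : Fin p × Fin M → ℝ) (j : Fin p) : Fin M → ℝ := fun a => u (j, a)

/-- Euclidean norm of a vector. -/
def vnorm2 {M : ℕ} (v : Fin M → ℝ) : ℝ := Real.sqrt (∑ a, v a ^ 2)

/-- Block max norm of a vector in `ℝ^{pM}`: `max_j ‖u_j‖_2`. -/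
def vBlockMax {p M : ℕ} (u : Fin p × Fin M → ℝ) : ℝ := ⨆ j, vnorm2 (vblk u j)

/-- `j`-th block of a `pM × M` vertically stacked block matrix. -/
def sblk {p M : ℕ} (x : Matrix (Fin p × Fin M) (Fin M) ℝ) (j : Fin p) :
    Matrix (Fin M) (Fin M) ℝ := fun a b => x (j, a) b

/-- `max_j ‖x_j‖_F` for a `pM × M` stacked block matrix. -/
def stackMax {p M : ℕ} (x : Matrix (Fin p × Fin M) (Fin M) ℝ) : ℝ :=
  ⨆ j, frobG (sblk x j)

/-- `Σ_j ‖x_j‖_F` for a `pM × M` stacked block matrix. -/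
def stackOne {p M : ℕ} (x : Matrix (Fin p × Fin M) (Fin M) ℝ) : ℝ :=
  ∑ j, frobG (sblk x j)

/-- The block matrix `Ω` with blocks `Ω_{jl} = θ_{jl} Γ_{jl}`. -/
def mkOmega {p M : ℕ} (Θ : Matrix (Fin p) (Fin p) ℝ)
    (G : Matrix (Fin p × Fin M) (Fin p × Fin M) ℝ) :
    Matrix (Fin p × Fin M) (Fin p × Fin M) ℝ :=
  fun x y => Θ x.1 y.1 * G x y

/-- Feasible parameters `(Θ, Γ)` for the joint functional graphical model:
`Θ` symmetric with nonnegative off-diagonal and positive diagonal entries,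
each `Γ^{(k)}` block-symmetric (`Γ_{lj} = Γ_{jl}ᵀ`), and every
`Ω^{(k)} = (θ_{jl} Γ^{(k)}_{jl})` symmetric positive definite. -/
def Feasible {p M K : ℕ} (Θ : Matrix (Fin p) (Fin p) ℝ)
    (Γ : Fin K → Matrix (Fin p × Fin M) (Fin p × Fin M) ℝ) : Prop :=
  Θ.IsSymm ∧ (∀ j l : Fin p, j ≠ l → 0 ≤ Θ j l) ∧ (∀ j : Fin p, 0 < Θ j j) ∧
    (∀ (k : Fin K) (j l : Fin p), blk (Γ k) l j = (blk (Γ k) j l)ᵀ) ∧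
    (∀ k : Fin K, (mkOmega Θ (Γ k)).PosDef)

/-- The negative log-likelihood part `Σ_k [tr(Σ̂^{(k)} Ω^{(k)}) − log det Ω^{(k)}]`. -/
def loss {p M K : ℕ}
    (Sig Ω : Fin K → Matrix (Fin p × Fin M) (Fin p × Fin M) ℝ) : ℝ :=
  ∑ k, (Matrix.trace (Sig k * Ω k) - Real.log (Ω k).det)

/-- `Σ_{j≠l} θ_{jl}`. -/
def pen1 {p : ℕ} (Θ : Matrix (Fin p) (Fin p) ℝ) : ℝ :=
  ∑ q ∈ (Finset.univ : Finset (Fin p)).offDiag, Θ q.1 q.2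

/-- `Σ_{j≠l} Σ_k ‖Γ^{(k)}_{jl}‖_F`. -/
def pen2 {p M K : ℕ} (Γ : Fin K → Matrix (Fin p × Fin M) (Fin p × Fin M) ℝ) : ℝ :=
  ∑ q ∈ (Finset.univ : Finset (Fin p)).offDiag, ∑ k, frobG (blk (Γ k) q.1 q.2)

/-- The objective `Q₁(λ₁, λ₂, Θ, Γ)`. -/
def Q1 {p M K : ℕ} (Sig : Fin K → Matrix (Fin p × Fin M) (Fin p × Fin M) ℝ)
    (l1 l2 : ℝ) (Θ : Matrix (Fin p) (Fin p) ℝ)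
    (Γ : Fin K → Matrix (Fin p × Fin M) (Fin p × Fin M) ℝ) : ℝ :=
  loss Sig (fun k => mkOmega Θ (Γ k)) + l1 * pen1 Θ + l2 * pen2 Γ

/-- The objective `Q₂(λ, Θ, Γ)`. -/
def Q2 {p M K : ℕ} (Sig : Fin K → Matrix (Fin p × Fin M) (Fin p × Fin M) ℝ)
    (lam : ℝ) (Θ : Matrix (Fin p) (Fin p) ℝ)
    (Γ : Fin K → Matrix (Fin p × Fin M) (Fin p × Fin M) ℝ) : ℝ :=
  loss Sig (fun k => mkOmega Θ (Γ k)) + pen1 Θ + lam * pen2 Γ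

/-- The objective `Q₃(λ, Ω)`. -/
def Q3 {p M K : ℕ} (Sig : Fin K → Matrix (Fin p × Fin M) (Fin p × Fin M) ℝ)
    (lam : ℝ) (Ω : Fin K → Matrix (Fin p × Fin M) (Fin p × Fin M) ℝ) : ℝ :=
  loss Sig Ω + lam * ∑ q ∈ (Finset.univ : Finset (Fin p)).offDiag,
    Real.sqrt (∑ k, frobG (blk (Ω k) q.1 q.2))

/-- The ℓ₁ distance `‖Θ − Θ'‖₁ + Σ_k ‖Γ^{(k)} − Γ'^{(k)}‖₁` between parameter pairs. -/
def paramDist {p M K : ℕ} (Θ Θ' : Matrix (Fin p) (Fin p) ℝ)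
    (Γ Γ' : Fin K → Matrix (Fin p × Fin M) (Fin p × Fin M) ℝ) : ℝ :=
  ell1 (Θ - Θ') + ∑ k, ell1 (Γ k - Γ' k)

/-- `(Θ̂, Γ̂)` is a local minimizer of `Q₁(λ₁, λ₂, ·, ·)` (parameters restricted to
`θ_{jj} = 1`). -/
def IsLocalMinQ1 {p M K : ℕ}
    (Sig : Fin K → Matrix (Fin p × Fin M) (Fin p × Fin M) ℝ)
    (l1 l2 : ℝ) (Θh : Matrix (Fin p) (Fin p) ℝ)
    (Γh : Fin K → Matrix (Fin p × Fin M) (Fin p × Fin M) ℝ) : Prop :=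
  (Feasible Θh Γh ∧ ∀ j, Θh j j = 1) ∧
    ∃ δ > 0, ∀ Θ Γ, Feasible Θ Γ → (∀ j, Θ j j = 1) →
      paramDist Θ Θh Γ Γh < δ → Q1 Sig l1 l2 Θh Γh ≤ Q1 Sig l1 l2 Θ Γ

/-- `(Θ̂, Γ̂)` is a local minimizer of `Q₂(λ, ·, ·)` over the full parameter space. -/
def IsLocalMinQ2 {p M K : ℕ}
    (Sig : Fin K → Matrix (Fin p × Fin M) (Fin p × Fin M) ℝ)
    (lam : ℝ) (Θh : Matrix (Fin p) (Fin p) ℝ)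
    (Γh : Fin K → Matrix (Fin p × Fin M) (Fin p × Fin M) ℝ) : Prop :=
  Feasible Θh Γh ∧
    ∃ δ > 0, ∀ Θ Γ, Feasible Θ Γ →
      paramDist Θ Θh Γ Γh < δ → Q2 Sig lam Θh Γh ≤ Q2 Sig lam Θ Γ

/-- `Ω̂` is a local minimizer of `Q₃(λ, ·)` over `K`-tuples of symmetric positive
definite matrices. -/
def IsLocalMinQ3 {p M K : ℕ}
    (Sig : Fin K → Matrix (Fin p × Fin M) (Fin p × Fin M) ℝ)
    (lam : ℝ) (Ωh : Fin K → Matrix (Fin p × Fin M) (Fin p × Fin M) ℝ) : Prop :=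
  (∀ k, (Ωh k).PosDef) ∧
    ∃ δ > 0, ∀ Ω : Fin K → Matrix (Fin p × Fin M) (Fin p × Fin M) ℝ,
      (∀ k, (Ω k).PosDef) →
      (∑ k, ell1 (Ω k - Ωh k)) < δ → Q3 Sig lam Ωh ≤ Q3 Sig lam Ω


lemma frobG_nonneg {α β : Type*} [Fintype α] [Fintype β] (B : Matrix α β ℝ) : 0 ≤ frobG B :=
  Real.sqrt_nonneg _

lemma frobG_smul {α β : Type*} [Fintype α] [Fintype β] (c : ℝ) (B : Matrix α β ℝ) :
    frobG (fun a b => c * B a b) = |c| * frobG B := by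
  unfold frobG
  rw [← Real.sqrt_sq_eq_abs, ← Real.sqrt_mul (sq_nonneg c)]
  congr 1
  rw [Finset.mul_sum]
  refine Finset.sum_congr rfl fun a _ => ?_
  rw [Finset.mul_sum]
  exact Finset.sum_congr rfl fun b _ => by ring

lemma frobG_transpose {α β : Type*} [Fintype α] [Fintype β] (B : Matrix α β ℝ) :
    frobG Bᵀ = frobG B := by
  unfold frobG
  rw [Finset.sum_comm]
  rfl

lemma frobG_eq_zero {α β : Type*} [Fintype α] [Fintype β] {B : Matrix α β ℝ}
    (h : frobG B = 0) (a : α) (b : β) : B a b = 0 := by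
  unfold frobG at h
  have hnn : (0:ℝ) ≤ ∑ a, ∑ b, B a b ^ 2 :=
      Finset.sum_nonneg fun _ _ => Finset.sum_nonneg fun _ _ => sq_nonneg _
  have h2 : (∑ a, ∑ b, B a b ^ 2) = 0 := by
    nlinarith [Real.sq_sqrt hnn]
  have h3 := (Finset.sum_eq_zero_iff_of_nonneg (fun a _ =>
    Finset.sum_nonneg fun b _ => sq_nonneg (B a b))).mp h2 a (Finset.mem_univ a)
  have h4 := (Finset.sum_eq_zero_iff_of_nonneg (fun b _ => sq_nonneg (B a b))).mp h3 b
    (Finset.mem_univ b)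
  exact pow_eq_zero_iff (n := 2) (by norm_num) |>.mp h4

lemma frobG_zero {α β : Type*} [Fintype α] [Fintype β] :
    frobG (0 : Matrix α β ℝ) = 0 := by
  unfold frobG; simp [Matrix.zero_apply]

lemma ell1_nonneg {α β : Type*} [Fintype α] [Fintype β] (A : Matrix α β ℝ) : 0 ≤ ell1 A :=
  Finset.sum_nonneg fun _ _ => Finset.sum_nonneg fun _ _ => abs_nonneg _

lemma ell1_entry_le {α β : Type*} [Fintype α] [Fintype β] (A : Matrix α β ℝ) (i : α) (j : β) :
    |A i j| ≤ ell1 A := by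
  calc |A i j| ≤ ∑ j', |A i j'| :=
        Finset.single_le_sum (f := fun j' => |A i j'|) (fun _ _ => abs_nonneg _)
          (Finset.mem_univ j)
    _ ≤ ell1 A := Finset.single_le_sum (f := fun i' => ∑ j', |A i' j'|)
        (fun _ _ => Finset.sum_nonneg fun _ _ => abs_nonneg _) (Finset.mem_univ i)

lemma two_sqrt_mul_le (a b : ℝ) (ha : 0 ≤ a) (hb : 0 ≤ b) :
    2 * Real.sqrt (a * b) ≤ a + b := by
  rw [Real.sqrt_mul ha]
  nlinarith [Real.sq_sqrt ha, Real.sq_sqrt hb, sq_nonneg (Real.sqrt a - Real.sqrt b)]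

lemma ell1_le_add_sub {α β : Type*} [Fintype α] [Fintype β] (A B : Matrix α β ℝ) :
    ell1 A ≤ ell1 B + ell1 (A - B) := by
  unfold ell1
  rw [← Finset.sum_add_distrib]
  refine Finset.sum_le_sum fun i _ => ?_
  rw [← Finset.sum_add_distrib]
  refine Finset.sum_le_sum fun j _ => ?_
  have : A i j = B i j + (A - B) i j := by simp
  rw [this]
  exact abs_add_le _ _

lemma ell1_mkOmega_sub {p M : ℕ} (Θ Θ' : Matrix (Fin p) (Fin p) ℝ)
    (G G' : Matrix (Fin p × Fin M) (Fin p × Fin M) ℝ) :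
    ell1 (mkOmega Θ G - mkOmega Θ' G') ≤
      ell1 Θ * ell1 (G - G') + ell1 (Θ - Θ') * ell1 G' := by
  have key : ∀ (x y : Fin p × Fin M), |(mkOmega Θ G - mkOmega Θ' G') x y| ≤
      ell1 Θ * |(G - G') x y| + ell1 (Θ - Θ') * |G' x y| := by
    intro x y
    have h1 : (mkOmega Θ G - mkOmega Θ' G') x y
        = Θ x.1 y.1 * (G - G') x y + (Θ - Θ') x.1 y.1 * G' x y := by
      simp [mkOmega, Matrix.sub_apply]; ring
    rw [h1]
    calc |Θ x.1 y.1 * (G - G') x y + (Θ - Θ') x.1 y.1 * G' x y|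
        ≤ |Θ x.1 y.1 * (G - G') x y| + |(Θ - Θ') x.1 y.1 * G' x y| := abs_add_le _ _
      _ = |Θ x.1 y.1| * |(G - G') x y| + |(Θ - Θ') x.1 y.1| * |G' x y| := by
          rw [abs_mul, abs_mul]
      _ ≤ ell1 Θ * |(G - G') x y| + ell1 (Θ - Θ') * |G' x y| :=
          add_le_add (mul_le_mul_of_nonneg_right (ell1_entry_le _ _ _) (abs_nonneg _))
            (mul_le_mul_of_nonneg_right (ell1_entry_le _ _ _) (abs_nonneg _))
  calc ell1 (mkOmega Θ G - mkOmega Θ' G')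
      ≤ ∑ x, ∑ y, (ell1 Θ * |(G - G') x y| + ell1 (Θ - Θ') * |G' x y|) :=
        Finset.sum_le_sum fun x _ => Finset.sum_le_sum fun y _ => key x y
    _ = ell1 Θ * ell1 (G - G') + ell1 (Θ - Θ') * ell1 G' := by
        simp [Finset.sum_add_distrib, ← Finset.mul_sum, ell1]

lemma pair_ineq {M K : ℕ} (l1 l2 θ : ℝ) (hl1 : 0 < l1) (hl2 : 0 < l2) (hθ : 0 ≤ θ)
    (G : Fin K → Matrix (Fin M) (Fin M) ℝ) :
    2 * Real.sqrt (l1 * l2) * Real.sqrt (∑ k, frobG (fun a b => θ * G k a b)) ≤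
      l1 * θ + l2 * ∑ k, frobG (G k) := by
  have hT : 0 ≤ ∑ k, frobG (G k) := Finset.sum_nonneg fun _ _ => frobG_nonneg _
  have h1 : (∑ k, frobG (fun a b => θ * G k a b)) = θ * ∑ k, frobG (G k) := by
    rw [Finset.mul_sum]
    exact Finset.sum_congr rfl fun k _ => by rw [frobG_smul, abs_of_nonneg hθ]
  rw [h1]
  calc 2 * Real.sqrt (l1 * l2) * Real.sqrt (θ * ∑ k, frobG (G k))
      = 2 * Real.sqrt ((l1 * θ) * (l2 * ∑ k, frobG (G k))) := by
        rw [mul_assoc, ← Real.sqrt_mul (by positivity)]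
        congr 2; ring
    _ ≤ l1 * θ + l2 * ∑ k, frobG (G k) :=
        two_sqrt_mul_le _ _ (by positivity) (mul_nonneg hl2.le hT)

lemma pair_eq (l1 l2 sv : ℝ) (hl1 : 0 < l1) (hl2 : 0 < l2) (hsv : 0 < sv) :
    l1 * Real.sqrt (l2 / l1 * sv) + l2 * ((Real.sqrt (l2 / l1 * sv))⁻¹ * sv) =
      2 * Real.sqrt (l1 * l2) * Real.sqrt sv := by
  set θ := Real.sqrt (l2 / l1 * sv) with hθ
  have hθpos : 0 < θ := Real.sqrt_pos.mpr (by positivity)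
  have hθ2 : θ ^ 2 = l2 / l1 * sv := Real.sq_sqrt (by positivity)
  have hl1θ2 : l1 * θ ^ 2 = l2 * sv := by
    rw [hθ2]; field_simp
  have h1 : Real.sqrt (l1 * l2) * Real.sqrt sv = l1 * θ := by
    rw [← Real.sqrt_mul (by positivity)]
    rw [show l1 * l2 * sv = (l1 * θ) ^ 2 by nlinarith]
    exact Real.sqrt_sq (by positivity)
  have h2 : l2 * (θ⁻¹ * sv) = l1 * θ := by
    field_simp
    nlinarith
  rw [h2, mul_assoc, h1]; ring

lemma Q3_le_Q1 {p M K : ℕ} (Sig : Fin K → Matrix (Fin p × Fin M) (Fin p × Fin M) ℝ)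
    {l1 l2 : ℝ} (hl1 : 0 < l1) (hl2 : 0 < l2)
    (Θ : Matrix (Fin p) (Fin p) ℝ)
    (Γ : Fin K → Matrix (Fin p × Fin M) (Fin p × Fin M) ℝ)
    (hΘ : ∀ j l : Fin p, j ≠ l → 0 ≤ Θ j l) :
    Q3 Sig (2 * Real.sqrt (l1 * l2)) (fun k => mkOmega Θ (Γ k)) ≤ Q1 Sig l1 l2 Θ Γ := by
  unfold Q3 Q1 pen1 pen2
  have hpen : 2 * Real.sqrt (l1 * l2) * ∑ q ∈ (Finset.univ : Finset (Fin p)).offDiag,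
      Real.sqrt (∑ k, frobG (blk (mkOmega Θ (Γ k)) q.1 q.2))
      ≤ l1 * ∑ q ∈ (Finset.univ : Finset (Fin p)).offDiag, Θ q.1 q.2
        + l2 * ∑ q ∈ (Finset.univ : Finset (Fin p)).offDiag,
            ∑ k, frobG (blk (Γ k) q.1 q.2) := by
    rw [Finset.mul_sum, Finset.mul_sum, Finset.mul_sum, ← Finset.sum_add_distrib]
    refine Finset.sum_le_sum fun q hq => ?_
    have hne := (Finset.mem_offDiag.mp hq).2.2
    exact pair_ineq (M := M) (K := K) l1 l2 (Θ q.1 q.2) hl1 hl2 (hΘ _ _ hne)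
      (fun k => blk (Γ k) q.1 q.2)
  linarith


/-- Theorem 2, converse direction. If `Ω̂` is a local minimizer of
`Q₃(2√(λ₁λ₂), ·)`, then there is a local minimizer `(Θ̂, Γ̂)` of `Q₁(λ₁, λ₂, ·, ·)`
with `θ̂_{jl} Γ̂^{(k)}_{jl} = Ω̂^{(k)}_{jl}` for all `j, l, k`. -/
theorem statement_1 {p M K : ℕ} (hp : 2 ≤ p) (hM : 1 ≤ M) (hK : 1 ≤ K)
    (l1 l2 : ℝ) (hl1 : 0 < l1) (hl2 : 0 < l2)
    (Sig : Fin K → Matrix (Fin p × Fin M) (Fin p × Fin M) ℝ)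
    (hSig : ∀ k, (Sig k).IsSymm)
    (Ωh : Fin K → Matrix (Fin p × Fin M) (Fin p × Fin M) ℝ)
    (h : IsLocalMinQ3 Sig (2 * Real.sqrt (l1 * l2)) Ωh) :
    ∃ (Θh : Matrix (Fin p) (Fin p) ℝ)
      (Γh : Fin K → Matrix (Fin p × Fin M) (Fin p × Fin M) ℝ),
      IsLocalMinQ1 Sig l1 l2 Θh Γh ∧
        ∀ k, mkOmega Θh (Γh k) = Ωh k := by
  classical
  obtain ⟨hPD, δ, hδpos, hmin⟩ := h
  have hΩsym : ∀ (k : Fin K) (x y : Fin p × Fin M), Ωh k x y = Ωh k y x := by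
    intro k x y
    have h1 := (hPD k).isHermitian
    have h2 := congrFun (congrFun h1 y) x
    simpa [Matrix.conjTranspose_apply] using h2
  set s : Fin p → Fin p → ℝ := fun j l => ∑ k, frobG (blk (Ωh k) j l) with hs_def
  have hs_nonneg : ∀ j l, 0 ≤ s j l := fun j l =>
    Finset.sum_nonneg fun _ _ => frobG_nonneg _
  have hs_symm : ∀ j l, s j l = s l j := by
    intro j l
    refine Finset.sum_congr rfl fun k _ => ?_
    have hb : blk (Ωh k) j l = (blk (Ωh k) l j)ᵀ := by
      funext a b
      exact hΩsym k (j, a) (l, b)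
    rw [hb, frobG_transpose]
  set Θh : Matrix (Fin p) (Fin p) ℝ :=
    Matrix.of (fun j l => if j = l then 1 else Real.sqrt (l2 / l1 * s j l)) with hΘh_def
  set Γh : Fin K → Matrix (Fin p × Fin M) (Fin p × Fin M) ℝ :=
    fun k => Matrix.of (fun x y =>
      if Θh x.1 y.1 = 0 then 0 else Ωh k x y / Θh x.1 y.1) with hΓh_def
  have hΘ_entry : ∀ j l, Θh j l = if j = l then 1 else Real.sqrt (l2 / l1 * s j l) :=
    fun j l => rfl
  have hΓ_entry : ∀ k x y, Γh k x y =
      if Θh x.1 y.1 = 0 then 0 else Ωh k x y / Θh x.1 y.1 := fun k x y => rfl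
  have hΘ_diag : ∀ j, Θh j j = 1 := fun j => by rw [hΘ_entry]; simp
  have hΘ_nonneg : ∀ j l, 0 ≤ Θh j l := by
    intro j l
    rw [hΘ_entry]
    by_cases hjl : j = l
    · simp [hjl]
    · simp [hjl, Real.sqrt_nonneg]
  have hΘ_symm_entry : ∀ j l, Θh j l = Θh l j := by
    intro j l
    rw [hΘ_entry, hΘ_entry]
    by_cases hjl : j = l
    · simp [hjl]
    · simp [hjl, Ne.symm hjl, hs_symm j l]
  have hzero : ∀ j l, Θh j l = 0 → ∀ (k : Fin K) a b, Ωh k (j, a) (l, b) = 0 := by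
    intro j l h0 k a b
    by_cases hjl : j = l
    · exfalso; subst hjl; rw [hΘ_diag] at h0; norm_num at h0
    · rw [hΘ_entry] at h0
      simp only [hjl, if_false] at h0
      have h1 : l2 / l1 * s j l = 0 :=
        (Real.sqrt_eq_zero (mul_nonneg (by positivity) (hs_nonneg j l))).mp h0
      have hsl : s j l = 0 := by
        have : l2 / l1 ≠ 0 := by positivity
        exact (mul_eq_zero.mp h1).resolve_left this
      have hf : frobG (blk (Ωh k) j l) = 0 := by
        have := (Finset.sum_eq_zero_iff_of_nonneg
          (fun k _ => frobG_nonneg (blk (Ωh k) j l))).mp hsl k (Finset.mem_univ k)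
        exact this
      exact frobG_eq_zero hf a b
  have hOmega_eq : ∀ k, mkOmega Θh (Γh k) = Ωh k := by
    intro k
    ext x y
    show Θh x.1 y.1 * Γh k x y = Ωh k x y
    rw [hΓ_entry]
    by_cases h0 : Θh x.1 y.1 = 0
    · simp only [h0, if_true, mul_zero]
      exact (hzero x.1 y.1 h0 k x.2 y.2).symm
    · simp only [h0, if_false]
      rw [mul_comm, div_mul_cancel₀ _ h0]
  have hFeas : Feasible Θh Γh := by
    refine ⟨?_, fun j l _ => hΘ_nonneg j l, fun j => by rw [hΘ_diag]; norm_num, ?_, ?_⟩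
    · ext j l
      rw [Matrix.transpose_apply]
      exact hΘ_symm_entry l j
    · intro k j l
      funext a b
      show Γh k (l, a) (j, b) = Γh k (j, b) (l, a)
      rw [hΓ_entry, hΓ_entry]
      simp only
      rw [hΘ_symm_entry l j, hΩsym k (l, a) (j, b)]
    · intro k
      rw [hOmega_eq k]
      exact hPD k
  have hlossEq : (fun k => mkOmega Θh (Γh k)) = Ωh := funext hOmega_eq
  -- value equality
  have hpairEq : ∀ q ∈ (Finset.univ : Finset (Fin p)).offDiag,
      l1 * Θh q.1 q.2 + l2 * ∑ k, frobG (blk (Γh k) q.1 q.2)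
        = 2 * Real.sqrt (l1 * l2) * Real.sqrt (s q.1 q.2) := by
    intro q hq
    have hne := (Finset.mem_offDiag.mp hq).2.2
    by_cases hs0 : s q.1 q.2 = 0
    · have hθ0 : Θh q.1 q.2 = 0 := by
        rw [hΘ_entry]
        simp [hne, hs0]
      have hG0 : ∀ k : Fin K, frobG (blk (Γh k) q.1 q.2) = 0 := by
        intro k
        have : blk (Γh k) q.1 q.2 = (0 : Matrix (Fin M) (Fin M) ℝ) := by
          funext a b
          show Γh k (q.1, a) (q.2, b) = 0
          rw [hΓ_entry]
          simp [hθ0]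
        rw [this, frobG_zero]
      rw [hθ0, hs0]
      simp [Finset.sum_congr rfl fun k _ => hG0 k]
    · have hspos : 0 < s q.1 q.2 := lt_of_le_of_ne (hs_nonneg _ _) (Ne.symm hs0)
      have hθval : Θh q.1 q.2 = Real.sqrt (l2 / l1 * s q.1 q.2) := by
        rw [hΘ_entry]; simp [hne]
      have hθpos : 0 < Θh q.1 q.2 := by
        rw [hθval]; exact Real.sqrt_pos.mpr (mul_pos (by positivity) hspos)
      have hGk : ∀ k : Fin K, frobG (blk (Γh k) q.1 q.2)
          = (Θh q.1 q.2)⁻¹ * frobG (blk (Ωh k) q.1 q.2) := by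
        intro k
        have : blk (Γh k) q.1 q.2
            = fun a b => (Θh q.1 q.2)⁻¹ * blk (Ωh k) q.1 q.2 a b := by
          funext a b
          show Γh k (q.1, a) (q.2, b) = _
          rw [hΓ_entry]
          simp only [hθpos.ne', if_false]
          rw [div_eq_inv_mul]
          rfl
        rw [this, frobG_smul, abs_of_nonneg (inv_nonneg.mpr hθpos.le)]
      have hsum : ∑ k, frobG (blk (Γh k) q.1 q.2) = (Θh q.1 q.2)⁻¹ * s q.1 q.2 := by
        rw [Finset.sum_congr rfl fun k _ => hGk k, ← Finset.mul_sum]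
      rw [hsum, hθval]
      exact pair_eq l1 l2 (s q.1 q.2) hl1 hl2 hspos
  have hQeq : Q1 Sig l1 l2 Θh Γh = Q3 Sig (2 * Real.sqrt (l1 * l2)) Ωh := by
    unfold Q1 Q3 pen1 pen2
    rw [hlossEq]
    have : l1 * ∑ q ∈ (Finset.univ : Finset (Fin p)).offDiag, Θh q.1 q.2
        + l2 * ∑ q ∈ (Finset.univ : Finset (Fin p)).offDiag,
            ∑ k, frobG (blk (Γh k) q.1 q.2)
        = 2 * Real.sqrt (l1 * l2) * ∑ q ∈ (Finset.univ : Finset (Fin p)).offDiag,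
            Real.sqrt (∑ k, frobG (blk (Ωh k) q.1 q.2)) := by
      rw [Finset.mul_sum, Finset.mul_sum, Finset.mul_sum, ← Finset.sum_add_distrib]
      exact Finset.sum_congr rfl fun q hq => hpairEq q hq
    linarith [this]
  -- local min
  set S : ℝ := ∑ k, ell1 (Γh k) with hS_def
  have hS_nonneg : 0 ≤ S := Finset.sum_nonneg fun _ _ => ell1_nonneg _
  set C : ℝ := ell1 Θh + 1 + S with hC_def
  have hCpos : 0 < C := by
    have := ell1_nonneg Θh
    simp only [hC_def]
    linarith
  refine ⟨Θh, Γh, ⟨⟨hFeas, hΘ_diag⟩, min 1 (δ / C), lt_min one_pos (by positivity), ?_⟩,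
    hOmega_eq⟩
  intro Θ Γ hF hdiag hdist
  have hd1 : paramDist Θ Θh Γ Γh < 1 := lt_of_lt_of_le hdist (min_le_left _ _)
  have hd2 : paramDist Θ Θh Γ Γh < δ / C := lt_of_lt_of_le hdist (min_le_right _ _)
  set d : ℝ := paramDist Θ Θh Γ Γh with hd_def
  have hd_nonneg : 0 ≤ d := add_nonneg (ell1_nonneg _)
    (Finset.sum_nonneg fun _ _ => ell1_nonneg _)
  have hdθ : ell1 (Θ - Θh) ≤ d := by
    have : 0 ≤ ∑ k, ell1 (Γ k - Γh k) := Finset.sum_nonneg fun _ _ => ell1_nonneg _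
    simp only [hd_def, paramDist]
    linarith
  have hdΓ : ∑ k, ell1 (Γ k - Γh k) ≤ d := by
    have := ell1_nonneg (Θ - Θh)
    simp only [hd_def, paramDist]
    linarith
  -- ell1 distance of Omegas
  have hOdist : (∑ k, ell1 (mkOmega Θ (Γ k) - Ωh k)) < δ := by
    have hbound : ∀ k : Fin K, ell1 (mkOmega Θ (Γ k) - Ωh k)
        ≤ ell1 Θ * ell1 (Γ k - Γh k) + ell1 (Θ - Θh) * ell1 (Γh k) := by
      intro k
      rw [← hOmega_eq k]
      exact ell1_mkOmega_sub Θ Θh (Γ k) (Γh k)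
    have hΘbound : ell1 Θ ≤ ell1 Θh + d :=
      le_trans (ell1_le_add_sub Θ Θh) (by linarith)
    calc (∑ k, ell1 (mkOmega Θ (Γ k) - Ωh k))
        ≤ ∑ k, (ell1 Θ * ell1 (Γ k - Γh k) + ell1 (Θ - Θh) * ell1 (Γh k)) :=
          Finset.sum_le_sum fun k _ => hbound k
      _ = ell1 Θ * (∑ k, ell1 (Γ k - Γh k)) + ell1 (Θ - Θh) * S := by
          rw [Finset.sum_add_distrib, ← Finset.mul_sum, ← Finset.mul_sum]
      _ ≤ (ell1 Θh + d) * (∑ k, ell1 (Γ k - Γh k)) + d * S := by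
          refine add_le_add ?_ ?_
          · exact mul_le_mul_of_nonneg_right hΘbound
              (Finset.sum_nonneg fun _ _ => ell1_nonneg _)
          · exact mul_le_mul_of_nonneg_right hdθ hS_nonneg
      _ ≤ (ell1 Θh + 1) * d + d * S := by
          refine add_le_add ?_ le_rfl
          refine mul_le_mul ?_ hdΓ (Finset.sum_nonneg fun _ _ => ell1_nonneg _) ?_
          · linarith
          · have := ell1_nonneg Θh; linarith
      _ = C * d := by rw [hC_def]; ring
      _ < C * (δ / C) := by
          exact mul_lt_mul_of_pos_left hd2 hCpos
      _ = δ := by field_simp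
  have hPDΘΓ : ∀ k, (mkOmega Θ (Γ k)).PosDef := hF.2.2.2.2
  have step1 : Q3 Sig (2 * Real.sqrt (l1 * l2)) Ωh
      ≤ Q3 Sig (2 * Real.sqrt (l1 * l2)) (fun k => mkOmega Θ (Γ k)) :=
    hmin _ hPDΘΓ hOdist
  have step2 : Q3 Sig (2 * Real.sqrt (l1 * l2)) (fun k => mkOmega Θ (Γ k))
      ≤ Q1 Sig l1 l2 Θ Γ :=
    Q3_le_Q1 Sig hl1 hl2 Θ Γ hF.2.1
  rw [hQeq]
  linarith

end JF
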